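/- arXiv:1301.6983 — 5 statements merged into one kernel-verified Lean document; each statement's English description precedes it below -/
import Mathlib

section
/- Replicating a set of vertices is order-independent: for a finite simple graph G and a finite set W of its vertices, the graph obtained by replicating the vertices of W one at a time (adding for each w a new clone w' adjacent to w and to all current neighbours of w) does not depend on the order in which the vertices of W are replicated. -/
/-!
Two consecutive replications commute up to the isomorphism exchanging the two new vertices, and
replication is transported along graph isomorphisms. Since any two orderings of `W` are related by
a chain of adjacent transpositions, all orderings give isomorphic graphs.
-/

/-- Replicating a single vertex `w`: add one new vertex (the `Sum.inr` element)
adjacent to `w` and to all neighbours of `w`. -/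
def SimpleGraph.replicateOne {V : Type} (G : SimpleGraph V) (w : V) :
    SimpleGraph (V ⊕ Unit) where
  Adj x y :=
    match x, y with
    | Sum.inl a, Sum.inl b => G.Adj a b
    | Sum.inl a, Sum.inr _ => G.Adj a w ∨ a = w
    | Sum.inr _, Sum.inl b => G.Adj w b ∨ w = b
    | Sum.inr _, Sum.inr _ => False
  symm := by
    constructor
    rintro (a | a) (b | b) h <;> simp only at h ⊢ <;>
      first
        | exact G.adj_symm h
        | (rcases h with h | h
           · exact Or.inl (G.adj_symm h)
           · exact Or.inr h.symm)
        | exact h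
  loopless := by
    constructor
    rintro (a | a) h <;> simp only at h; exact G.loopless.irrefl _ h

/-- Replicating the vertices of a list `l`, one at a time, from the head on. -/
def replicateList (V : Type) (G : SimpleGraph V) :
    (l : List V) → Σ V' : Type, SimpleGraph V'
  | [] => ⟨V, G⟩
  | w :: l => replicateList (V ⊕ Unit) (G.replicateOne w) (l.map Sum.inl)
termination_by l => l.length
decreasing_by simp [List.length_map]

namespace SimpleGraph

def Iso.replicateOne {V V' : Type} {G : SimpleGraph V} {G' : SimpleGraph V'} (e : G ≃g G')
    (w : V) : G.replicateOne w ≃g G'.replicateOne (e w) where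
  toEquiv := Equiv.sumCongr e.toEquiv (Equiv.refl Unit)
  map_rel_iff' := by
    rintro (a | a) (b | b)
    · exact e.map_adj_iff
    · show (G'.Adj (e a) (e w) ∨ e a = e w) ↔ (G.Adj a w ∨ a = w)
      rw [e.map_adj_iff, EquivLike.apply_eq_iff_eq]
    · show (G'.Adj (e w) (e b) ∨ e w = e b) ↔ (G.Adj w b ∨ w = b)
      rw [e.map_adj_iff, EquivLike.apply_eq_iff_eq]
    · exact Iff.rfl

def replicateOneComm {V : Type} (G : SimpleGraph V) (a b : V) :
    (G.replicateOne a).replicateOne (Sum.inl b)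
      ≃g (G.replicateOne b).replicateOne (Sum.inl a) where
  toFun
    | Sum.inl (Sum.inl v) => Sum.inl (Sum.inl v)
    | Sum.inl (Sum.inr u) => Sum.inr u
    | Sum.inr u => Sum.inl (Sum.inr u)
  invFun
    | Sum.inl (Sum.inl v) => Sum.inl (Sum.inl v)
    | Sum.inl (Sum.inr u) => Sum.inr u
    | Sum.inr u => Sum.inl (Sum.inr u)
  left_inv := by rintro ((v | u) | u) <;> rfl
  right_inv := by rintro ((v | u) | u) <;> rfl
  map_rel_iff' := by
    rintro ((u | x) | x) ((v | y) | y) <;> simp [replicateOne]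

end SimpleGraph

/-! Lists are written as `l.map f` with `f : α → V` so that induction on `l` can follow the
vertices of `l` into the growing vertex type `V ⊕ Unit`. -/

theorem replicateList_nil (V : Type) (G : SimpleGraph V) : replicateList V G [] = ⟨V, G⟩ := by
  rw [replicateList]

theorem replicateList_map_cons {α V : Type} (G : SimpleGraph V) (f : α → V) (w : α)
    (l : List α) :
    replicateList V G ((w :: l).map f)
      = replicateList (V ⊕ Unit) (G.replicateOne (f w)) (l.map (Sum.inl ∘ f)) := by
  rw [List.map_cons, replicateList, List.map_map]

theorem replicateList_map_congr {α V V' : Type} {G : SimpleGraph V} {G' : SimpleGraph V'}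
    (e : G ≃g G') (f : α → V) (l : List α) :
    Nonempty ((replicateList V G (l.map f)).2 ≃g (replicateList V' G' (l.map (e ∘ f))).2) := by
  induction l generalizing V V' with
  | nil =>
    rw [List.map_nil, List.map_nil, replicateList_nil, replicateList_nil]
    exact ⟨e⟩
  | cons w l ih =>
    rw [replicateList_map_cons, replicateList_map_cons]
    exact ih (e.replicateOne (f w)) (Sum.inl ∘ f)

theorem replicateList_map_perm {α V : Type} (G : SimpleGraph V) (f : α → V) {l₁ l₂ : List α}
    (h : l₁.Perm l₂) :
    Nonempty ((replicateList V G (l₁.map f)).2 ≃g (replicateList V G (l₂.map f)).2) := by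
  induction h generalizing V with
  | nil => exact ⟨RelIso.refl _⟩
  | cons w _ ih =>
    rw [replicateList_map_cons, replicateList_map_cons]
    exact ih _ _
  | swap a b l =>
    rw [replicateList_map_cons, replicateList_map_cons, replicateList_map_cons,
      replicateList_map_cons]
    -- `replicateOneComm` fixes the old vertices definitionally, so `e ∘ f` is again `f` here.
    exact replicateList_map_congr (G.replicateOneComm (f b) (f a)) (Sum.inl ∘ Sum.inl ∘ f) l
  | trans _ _ ih₁ ih₂ =>
    obtain ⟨e₁⟩ := ih₁ G f
    obtain ⟨e₂⟩ := ih₂ G f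
    exact ⟨e₁.trans e₂⟩

/-- Replication of a finite set of vertices is order-independent: replicating
the elements of `W` one at a time, in any two orders, produces isomorphic
graphs. -/
theorem replication_order_independent {V : Type} (G : SimpleGraph V)
    (W : Finset V) (l₁ l₂ : List V) (h₁ : l₁.Nodup) (h₂ : l₂.Nodup)
    (hW₁ : ∀ v, v ∈ l₁ ↔ v ∈ W) (hW₂ : ∀ v, v ∈ l₂ ↔ v ∈ W) :
    Nonempty ((replicateList V G l₁).2 ≃g (replicateList V G l₂).2) := by
  have hperm : l₁.Perm l₂ :=
    (List.perm_ext_iff_of_nodup h₁ h₂).2 fun v => (hW₁ v).trans (hW₂ v).symm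
  have := replicateList_map_perm G id hperm
  rwa [List.map_id, List.map_id] at this
end

section
/- For every n ≥ 4, the graph H_n has chromatic number 4. -/
/-- Gallai's graph `H n`. -/
def Hgraph (n : ℕ) : SimpleGraph (Fin n × ZMod 3) :=
  SimpleGraph.fromRel (fun x y =>
    (x.1 = y.1 ∧ x.2 ≠ y.2) ∨
    ((x.1 : ℕ) + 1 = (y.1 : ℕ) ∧ x.2 = y.2) ∨
    ((x.1 : ℕ) = 0 ∧ (y.1 : ℕ) = n - 1 ∧ y.2 = -x.2))

/-! ### Lower bound: `H n` is not 3-colorable -/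

lemma Hslope_eq : ∀ p q : ZMod 3 → ZMod 3, Function.Injective p → Function.Injective q →
    (∀ j, p j ≠ q j) → p 1 - p 0 = q 1 - q 0 := by decide

lemma Hslope_negdiff : ∀ p q : ZMod 3 → ZMod 3, Function.Injective p → Function.Injective q →
    (∀ j, p j ≠ q (-j)) → p 1 - p 0 = -(q 1 - q 0) := by decide

lemma Hminj : ∀ a b : Fin 3, ((a : ℕ) : ZMod 3) = ((b : ℕ) : ZMod 3) → a = b := by decide

lemma Hadj_col {n : ℕ} (i : Fin n) {j j' : ZMod 3} (h : j ≠ j') :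
    (Hgraph n).Adj (i, j) (i, j') := by
  rw [Hgraph, SimpleGraph.fromRel_adj]
  exact ⟨by simp [Prod.ext_iff, h], Or.inl (Or.inl ⟨rfl, h⟩)⟩

lemma Hadj_step {n : ℕ} (i i' : Fin n) (h : (i : ℕ) + 1 = (i' : ℕ)) (j : ZMod 3) :
    (Hgraph n).Adj (i, j) (i', j) := by
  rw [Hgraph, SimpleGraph.fromRel_adj]
  refine ⟨?_, Or.inl (Or.inr (Or.inl ⟨h, rfl⟩))⟩
  simp only [ne_eq, Prod.mk.injEq, not_and]
  intro hi
  exfalso; rw [hi] at h; omega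

lemma Hnot_col3 (n : ℕ) (hn : 4 ≤ n) : ¬ (Hgraph n).Colorable 3 := by
  rintro ⟨C⟩
  set g : Fin n → ZMod 3 → ZMod 3 := fun i j => ((C (i, j) : ℕ) : ZMod 3) with hg
  have ginj : ∀ i, Function.Injective (g i) := by
    intro i j j' h
    by_contra hne
    exact C.valid (Hadj_col i hne) (Hminj _ _ h)
  have hα : ∀ k (hk : k + 1 < n),
      g ⟨k, by omega⟩ 1 - g ⟨k, by omega⟩ 0 = g ⟨k+1, hk⟩ 1 - g ⟨k+1, hk⟩ 0 := by
    intro k hk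
    refine Hslope_eq _ _ (ginj _) (ginj _) (fun j => ?_)
    intro h
    exact C.valid (Hadj_step ⟨k, by omega⟩ ⟨k+1, hk⟩ rfl j) (Hminj _ _ h)
  have hconst : ∀ k (hk : k < n),
      g ⟨k, hk⟩ 1 - g ⟨k, hk⟩ 0 = g ⟨0, by omega⟩ 1 - g ⟨0, by omega⟩ 0 := by
    intro k
    induction k with
    | zero => intro _; rfl
    | succ m ih => intro hk; rw [← hα m hk, ih (by omega)]
  have htwist : ∀ j, g ⟨0, by omega⟩ j ≠ g ⟨n-1, by omega⟩ (-j) := by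
    intro j h
    have hadj : (Hgraph n).Adj (⟨0, by omega⟩, j) (⟨n-1, by omega⟩, -j) := by
      rw [Hgraph, SimpleGraph.fromRel_adj]
      refine ⟨?_, Or.inl (Or.inr (Or.inr ⟨rfl, rfl, rfl⟩))⟩
      simp only [ne_eq, Prod.mk.injEq, not_and, Fin.mk.injEq]
      intro hi; omega
    exact C.valid hadj (Hminj _ _ h)
  have key := Hslope_negdiff _ _ (ginj ⟨0, by omega⟩) (ginj ⟨n-1, by omega⟩) htwist
  rw [hconst (n-1) (by omega)] at key
  have hne : g ⟨0, by omega⟩ 1 - g ⟨0, by omega⟩ 0 ≠ 0 := by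
    intro h
    exact one_ne_zero (ginj ⟨0, by omega⟩ (sub_eq_zero.mp h))
  have : ∀ a : ZMod 3, a = -a → a ≠ 0 → False := by decide
  exact this _ key hne

/-! ### Upper bound: an explicit 4-coloring -/

/-- colors for the last column, as a function of `a = (n-2) mod 3`. -/
def HlastCol (a j : ZMod 3) : Option (ZMod 3) :=
  if a = 0 then (if j = 0 then some 1 else if j = 1 then some 0 else none)
  else if a = 1 then (if j = 0 then none else if j = 1 then some 0 else some 2)
  else (if j = 0 then some 1 else if j = 1 then none else some 0)

lemma HlastCol_inj : ∀ a j j' : ZMod 3, j ≠ j' → HlastCol a j ≠ HlastCol a j' := by decide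
lemma HlastCol_prev : ∀ a j : ZMod 3, HlastCol a j ≠ some (j + a) := by decide
lemma HlastCol_twist : ∀ a j : ZMod 3, HlastCol a j ≠ some (-j) := by decide

def Hcol (n : ℕ) (x : Fin n × ZMod 3) : Option (ZMod 3) :=
  if (x.1 : ℕ) = n - 1 then HlastCol ((n - 2 : ℕ) : ZMod 3) x.2
  else some (x.2 + ((x.1 : ℕ) : ZMod 3))

lemma Hcol_key (n : ℕ) (hn : 4 ≤ n) (i i' : Fin n) (j j' : ZMod 3)
    (hrel : (i = i' ∧ j ≠ j') ∨ ((i : ℕ) + 1 = (i' : ℕ) ∧ j = j') ∨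
      ((i : ℕ) = 0 ∧ (i' : ℕ) = n - 1 ∧ j' = -j)) :
    Hcol n (i, j) ≠ Hcol n (i', j') := by
  rcases hrel with ⟨hi, hj⟩ | ⟨hi, hj⟩ | ⟨h0, h1, hj⟩
  · subst hi
    unfold Hcol
    by_cases h : (i : ℕ) = n - 1
    · rw [if_pos h, if_pos h]
      exact HlastCol_inj _ _ _ hj
    · rw [if_neg h, if_neg h]
      intro hc
      injection hc with hc
      exact hj (add_right_cancel hc)
  · subst hj
    have hi'lt : (i' : ℕ) < n := i'.isLt
    have hine : (i : ℕ) ≠ n - 1 := by omega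
    unfold Hcol
    by_cases h : (i' : ℕ) = n - 1
    · have hi2 : (i : ℕ) = n - 2 := by omega
      rw [if_neg hine, if_pos h]
      intro hc
      apply HlastCol_prev ((n - 2 : ℕ) : ZMod 3) j
      rw [← hc, hi2]
    · rw [if_neg hine, if_neg h]
      have hcast : (((i' : ℕ) : ZMod 3)) = ((i : ℕ) : ZMod 3) + 1 := by
        rw [← hi]; push_cast; ring
      rw [hcast, ← add_assoc]
      intro hc
      injection hc with hc
      exact one_ne_zero (left_eq_add.mp hc)
  · subst hj
    have h0ne : (i : ℕ) ≠ n - 1 := by omega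
    unfold Hcol
    rw [if_neg h0ne, if_pos h1, h0]
    simp only [Nat.cast_zero, add_zero]
    intro hc
    exact HlastCol_twist _ (-j) (by rw [neg_neg]; exact hc.symm)

lemma Hcol4 (n : ℕ) (hn : 4 ≤ n) : (Hgraph n).Colorable 4 := by
  have C : (Hgraph n).Coloring (Option (ZMod 3)) := by
    refine SimpleGraph.Coloring.mk (Hcol n) ?_
    rintro ⟨i, j⟩ ⟨i', j'⟩ hadj
    rw [Hgraph, SimpleGraph.fromRel_adj] at hadj
    obtain ⟨hne, h | h⟩ := hadj
    · exact Hcol_key n hn i i' j j' h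
    · exact (Hcol_key n hn i' i j' j h).symm
  have hcard : Fintype.card (Option (ZMod 3)) = 4 := by simp
  exact hcard ▸ C.colorable

/-- For `n ≥ 4`, the graph `H n` has chromatic number 4. -/
theorem Hgraph_chromaticNumber (n : ℕ) (hn : 4 ≤ n) :
    (Hgraph n).chromaticNumber = 4 := by
  apply le_antisymm
  · exact_mod_cast (Hcol4 n hn).chromaticNumber_le
  · have h : ¬ (Hgraph n).chromaticNumber ≤ 3 := by
      rw [show ((3 : ℕ∞)) = ((3 : ℕ) : ℕ∞) by norm_cast,
        SimpleGraph.chromaticNumber_le_iff_colorable]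
      exact Hnot_col3 n hn
    have h34 : (3 : ℕ∞) < (Hgraph n).chromaticNumber := not_le.mp h
    calc (4 : ℕ∞) = 3 + 1 := by norm_num
      _ ≤ _ := Order.add_one_le_of_lt h34
end

section
/- For every n ≥ 4 and every vertex v of H_n, the graph H_n − v is 3-colourable; together with χ(H_n) = 4 this shows H_n is 4-critical. -/
set_option synthInstance.maxSize 1000

namespace HgraphAux

variable {n : ℕ}

lemma adj_col (i : Fin n) {j j' : ZMod 3} (h : j ≠ j') :
    (Hgraph n).Adj (i, j) (i, j') := by
  rw [Hgraph, SimpleGraph.fromRel_adj]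
  exact ⟨by simp [Prod.ext_iff, h], Or.inl (Or.inl ⟨rfl, h⟩)⟩

lemma adj_path (i k : Fin n) (h : (i : ℕ) + 1 = (k : ℕ)) (j : ZMod 3) :
    (Hgraph n).Adj (i, j) (k, j) := by
  rw [Hgraph, SimpleGraph.fromRel_adj]
  refine ⟨fun he => ?_, Or.inl (Or.inr (Or.inl ⟨h, rfl⟩))⟩
  have := congrArg (fun p => ((p.1 : Fin n) : ℕ)) he
  simp only at this; omega

lemma adj_wrap (i k : Fin n) (hi : (i : ℕ) = 0) (hk : (k : ℕ) = n - 1)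
    (hn : 2 ≤ n) (j : ZMod 3) : (Hgraph n).Adj (i, j) (k, -j) := by
  rw [Hgraph, SimpleGraph.fromRel_adj]
  refine ⟨fun he => ?_, Or.inl (Or.inr (Or.inr ⟨hi, hk, rfl⟩))⟩
  have := congrArg (fun p => ((p.1 : Fin n) : ℕ)) he
  simp only at this; omega

lemma not_colorable_three (n : ℕ) (hn : 4 ≤ n) : ¬ (Hgraph n).Colorable 3 := by
  rintro ⟨C⟩
  have hn0 : 0 < n := by omega
  set e : Fin 3 → ZMod 3 := fun k => ((k : ℕ) : ZMod 3) with he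
  have einj : Function.Injective e := by decide
  set g : ℕ → ZMod 3 → ZMod 3 :=
    fun i j => e (C (⟨i % n, Nat.mod_lt _ hn0⟩, j)) with hg
  have h1 : ∀ i, ∀ j j' : ZMod 3, j ≠ j' → g i j ≠ g i j' := by
    intro i j j' hjj heq
    exact C.valid (adj_col _ hjj) (einj heq)
  have h2 : ∀ i, i + 1 < n → ∀ j, g i j ≠ g (i+1) j := by
    intro i hi j heq
    refine C.valid (adj_path ⟨i % n, Nat.mod_lt _ hn0⟩ ⟨(i+1) % n, Nat.mod_lt _ hn0⟩ ?_ j)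
      (einj heq)
    simp only
    rw [Nat.mod_eq_of_lt (by omega : i < n), Nat.mod_eq_of_lt hi]
  have h3 : ∀ j, g 0 j ≠ g (n-1) (-j) := by
    intro j heq
    refine C.valid (adj_wrap ⟨0 % n, Nat.mod_lt _ hn0⟩ ⟨(n-1) % n, Nat.mod_lt _ hn0⟩ ?_ ?_
      (by omega) j) (einj heq)
    · simp
    · simp only
      rw [Nat.mod_eq_of_lt (by omega : n - 1 < n)]
  have tri : ∀ a b c : ZMod 3, a ≠ b → a ≠ c → b ≠ c → c = -(a+b) := by decide
  have g2 : ∀ i, g i 2 = -(g i 0 + g i 1) := fun i =>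
    tri _ _ _ (h1 i 0 1 (by decide)) (h1 i 0 2 (by decide)) (h1 i 1 2 (by decide))
  have step : ∀ a b a' b' : ZMod 3, a ≠ b → a' ≠ b' → a ≠ a' → b ≠ b' →
      -(a+b) ≠ -(a'+b') → b' - a' = b - a := by decide
  have hu : ∀ i, i + 1 < n → g (i+1) 1 - g (i+1) 0 = g i 1 - g i 0 := by
    intro i hi
    refine step _ _ _ _ (h1 i 0 1 (by decide)) (h1 (i+1) 0 1 (by decide))
      (h2 i hi 0) (h2 i hi 1) ?_
    rw [← g2 i, ← g2 (i+1)]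
    exact h2 i hi 2
  have huall : ∀ i, i ≤ n - 1 → g i 1 - g i 0 = g 0 1 - g 0 0 := by
    intro i hi
    induction i with
    | zero => rfl
    | succ k ih => rw [hu k (by omega)]; exact ih (by omega)
  have fin : ∀ a b a' b' : ZMod 3, a ≠ b → a' ≠ b' → b - a = b' - a' → a ≠ a' →
      b ≠ -(a'+b') → -(a+b) ≠ b' → False := by decide
  refine fin (g 0 0) (g 0 1) (g (n-1) 0) (g (n-1) 1)
    (h1 0 0 1 (by decide)) (h1 (n-1) 0 1 (by decide))
    ((huall (n-1) le_rfl).symm) ?_ ?_ ?_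
  · have := h3 0
    rwa [show -(0 : ZMod 3) = 0 by decide] at this
  · have := h3 1
    rw [show -(1 : ZMod 3) = 2 by decide] at this
    rwa [g2 (n-1)] at this
  · have := h3 2
    rw [show -(2 : ZMod 3) = 1 by decide] at this
    rwa [g2 0] at this

def emb3 (z : ZMod 3) : Fin 4 := ⟨z.val, lt_of_lt_of_le (ZMod.val_lt z) (by norm_num)⟩

lemma emb3_inj : Function.Injective emb3 := by decide

lemma emb3_ne_three : ∀ z, emb3 z ≠ 3 := by decide

lemma colorable_four (n : ℕ) (hn : 4 ≤ n) : (Hgraph n).Colorable 4 := by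
  classical
  have hn0 : 0 < n := by omega
  set jstar : ZMod 3 := 2 * ((n : ZMod 3) - 1) with hjs
  set col : Fin n × ZMod 3 → Fin 4 := fun p =>
    if p = (⟨0, hn0⟩, jstar) then (3 : Fin 4)
    else emb3 (p.2 + ((p.1 : ℕ) : ZMod 3)) with hcol
  have key : ∀ p q : Fin n × ZMod 3,
      ((p.1 = q.1 ∧ p.2 ≠ q.2) ∨
       ((p.1 : ℕ) + 1 = (q.1 : ℕ) ∧ p.2 = q.2) ∨
       ((p.1 : ℕ) = 0 ∧ (q.1 : ℕ) = n - 1 ∧ q.2 = -p.2)) →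
      p ≠ q → col p ≠ col q := by
    rintro p q hrel hne heq
    by_cases hp : p = (⟨0, hn0⟩, jstar)
    · have hq : q ≠ (⟨0, hn0⟩, jstar) := by rw [← hp]; exact hne.symm
      rw [hcol] at heq
      simp only [if_pos hp, if_neg hq] at heq
      exact emb3_ne_three _ heq.symm
    · by_cases hq : q = (⟨0, hn0⟩, jstar)
      · rw [hcol] at heq
        simp only [if_pos hq, if_neg hp] at heq
        exact emb3_ne_three _ heq
      · rw [hcol] at heq
        simp only [if_neg hp, if_neg hq] at heq
        have heq' := emb3_inj heq
        rcases hrel with ⟨h1, h2⟩ | ⟨h1, h2⟩ | ⟨h1, h2, h3⟩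
        · rw [h1] at heq'
          exact h2 (by linear_combination heq')
        · have hc : ((q.1 : ℕ) : ZMod 3) = ((p.1 : ℕ) : ZMod 3) + 1 := by
            rw [← h1]; push_cast; ring
          rw [hc, ← h2] at heq'
          have : (0 : ZMod 3) = 1 := by linear_combination heq'
          exact absurd this (by decide)
        · have hcp : ((p.1 : ℕ) : ZMod 3) = 0 := by rw [h1]; exact Nat.cast_zero
          have hcq : ((q.1 : ℕ) : ZMod 3) = (n : ZMod 3) - 1 := by
            rw [h2]
            have : ((n - 1 : ℕ) : ZMod 3) = (n : ZMod 3) - 1 := by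
              have h' : (n - 1) + 1 = n := by omega
              have := congrArg (fun t : ℕ => (t : ZMod 3)) h'
              push_cast at this
              linear_combination this
            exact this
          rw [hcp, hcq, h3] at heq'
          -- heq' : p.2 + 0 = -p.2 + ((n:ZMod 3) - 1)
          have hj : p.2 = jstar := by
            rw [hjs]
            have h2j : 2 * p.2 = (n : ZMod 3) - 1 := by linear_combination heq'
            have : ∀ x d : ZMod 3, 2 * x = d → x = 2 * d := by decide
            exact this _ _ h2j
          apply hp
          apply Prod.ext
          · exact Fin.ext (by simpa using h1)
          · simpa using hj
  refine ⟨SimpleGraph.Coloring.mk col ?_⟩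
  intro p q hadj heq
  rw [Hgraph, SimpleGraph.fromRel_adj] at hadj
  obtain ⟨hne, hrel | hrel⟩ := hadj
  · exact key p q hrel hne heq
  · exact key q p hrel hne.symm heq.symm

/-! ### Colourings avoiding one vertex -/

def fcol (m : ℕ) (s1 s2 j0 : ZMod 3) (p : Fin n × ZMod 3) : ZMod 3 :=
  if (p.1 : ℕ) ≤ m then p.2 + s1 * ((p.1 : ℕ) : ZMod 3)
  else -p.2 + (s1 * ((m : ℕ) : ZMod 3) + 2 * j0
    + s2 * (((p.1 : ℕ) - m - 1 : ℕ) : ZMod 3))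

lemma flip_proper (hn : 4 ≤ n) (m : ℕ) (hm : m ≤ n - 2)
    (s1 s2 : ZMod 3) (hs1 : s1 ≠ 0) (hs2 : s2 ≠ 0)
    (v : Fin n × ZMod 3)
    (hB : s1 * ((m : ℕ) : ZMod 3) + 2 * v.2 + s2 * (((n - 2 - m : ℕ)) : ZMod 3) ≠ 0)
    (hv1 : (v.1 : ℕ) = m ∨ (v.1 : ℕ) = m + 1) :
    ∀ p q : Fin n × ZMod 3, (Hgraph n).Adj p q → p ≠ v → q ≠ v →
      fcol m s1 s2 v.2 p ≠ fcol m s1 s2 v.2 q := by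
  have key : ∀ p q : Fin n × ZMod 3,
      ((p.1 = q.1 ∧ p.2 ≠ q.2) ∨
       ((p.1 : ℕ) + 1 = (q.1 : ℕ) ∧ p.2 = q.2) ∨
       ((p.1 : ℕ) = 0 ∧ (q.1 : ℕ) = n - 1 ∧ q.2 = -p.2)) →
      p ≠ v → q ≠ v → fcol m s1 s2 v.2 p = fcol m s1 s2 v.2 q → False := by
    rintro p q (⟨h1, h2⟩ | ⟨h1, h2⟩ | ⟨h1, h2, h3⟩) hp hq heq
    · -- same column
      rw [fcol, fcol, h1] at heq
      by_cases hle : (q.1 : ℕ) ≤ m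
      · simp only [if_pos hle] at heq
        exact h2 (by linear_combination heq)
      · simp only [if_neg hle] at heq
        exact h2 (by linear_combination -heq)
    · -- path edge
      by_cases hqle : (q.1 : ℕ) ≤ m
      · have hple : (p.1 : ℕ) ≤ m := by omega
        rw [fcol, fcol] at heq
        simp only [if_pos hple, if_pos hqle] at heq
        have hc : ((q.1 : ℕ) : ZMod 3) = ((p.1 : ℕ) : ZMod 3) + 1 := by
          rw [← h1]; push_cast; ring
        rw [hc, ← h2] at heq
        exact hs1 (by linear_combination -heq)
      · by_cases hple : (p.1 : ℕ) ≤ m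
        · -- flip step : p.1 = m, q.1 = m+1
          have hpm : (p.1 : ℕ) = m := by omega
          have hqm : (q.1 : ℕ) = m + 1 := by omega
          rw [fcol, fcol] at heq
          simp only [if_pos hple, if_neg hqle] at heq
          have hz : ((q.1 : ℕ) - m - 1 : ℕ) = 0 := by omega
          rw [hz, hpm, ← h2] at heq
          push_cast at heq
          have h2j : 2 * p.2 = 2 * v.2 := by linear_combination heq
          have hjj : p.2 = v.2 := by
            have : ∀ x d : ZMod 3, 2 * x = 2 * d → x = d := by decide
            exact this _ _ h2j
          rcases hv1 with hv | hv
          · exact hp (Prod.ext (Fin.ext (by omega)) hjj)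
          · exact hq (Prod.ext (Fin.ext (by omega)) (h2 ▸ hjj))
        · -- both in second segment
          rw [fcol, fcol] at heq
          simp only [if_neg hple, if_neg hqle] at heq
          have hc : ((q.1 : ℕ) - m - 1 : ℕ) = ((p.1 : ℕ) - m - 1 : ℕ) + 1 := by omega
          rw [hc] at heq
          push_cast at heq
          rw [h2] at heq
          exact hs2 (by linear_combination -heq)
    · -- wrap edge
      have hple : (p.1 : ℕ) ≤ m := by omega
      have hqle : ¬ (q.1 : ℕ) ≤ m := by omega
      rw [fcol, fcol] at heq
      simp only [if_pos hple, if_neg hqle] at heq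
      have hc : ((q.1 : ℕ) - m - 1 : ℕ) = (n - 2 - m : ℕ) := by omega
      rw [hc, h1, h3] at heq
      push_cast at heq
      exact hB (by linear_combination -heq)
  intro p q hadj hp hq heq
  rw [Hgraph, SimpleGraph.fromRel_adj] at hadj
  obtain ⟨hne, hrel | hrel⟩ := hadj
  · exact key p q hrel hp hq heq
  · exact key q p hrel hq hp heq.symm

def scol (n : ℕ) (p : Fin n × ZMod 3) : ZMod 3 :=
  p.2 + (if (p.1 : ℕ) = n - 1 then 0
    else if (p.1 : ℕ) = n - 2 then 1 else ((p.1 : ℕ) : ZMod 3))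

lemma special_proper (hn : 4 ≤ n) (hmod : n % 3 = 2)
    (v : Fin n × ZMod 3) (hv2 : v.2 = 0)
    (hv1 : (v.1 : ℕ) = 0 ∨ (v.1 : ℕ) = n - 1) :
    ∀ p q : Fin n × ZMod 3, (Hgraph n).Adj p q → p ≠ v → q ≠ v →
      scol n p ≠ scol n q := by
  have hn5 : 5 ≤ n := by omega
  have key : ∀ p q : Fin n × ZMod 3,
      ((p.1 = q.1 ∧ p.2 ≠ q.2) ∨
       ((p.1 : ℕ) + 1 = (q.1 : ℕ) ∧ p.2 = q.2) ∨
       ((p.1 : ℕ) = 0 ∧ (q.1 : ℕ) = n - 1 ∧ q.2 = -p.2)) →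
      p ≠ v → q ≠ v → scol n p = scol n q → False := by
    rintro p q (⟨h1, h2⟩ | ⟨h1, h2⟩ | ⟨h1, h2, h3⟩) hp hq heq
    · rw [scol, scol, h1] at heq
      exact h2 (by linear_combination heq)
    · -- path edge
      rw [scol, scol, ← h2] at heq
      have hb : (if (p.1 : ℕ) = n - 1 then (0 : ZMod 3)
          else if (p.1 : ℕ) = n - 2 then 1 else ((p.1 : ℕ) : ZMod 3)) =
          (if (q.1 : ℕ) = n - 1 then (0 : ZMod 3)
          else if (q.1 : ℕ) = n - 2 then 1 else ((q.1 : ℕ) : ZMod 3)) := by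
        linear_combination heq
      have hq1 : (q.1 : ℕ) ≤ n - 1 := by omega
      by_cases c1 : (q.1 : ℕ) = n - 1
      · have cp1 : ¬ (p.1 : ℕ) = n - 1 := by omega
        have cp2 : (p.1 : ℕ) = n - 2 := by omega
        rw [if_pos c1, if_neg cp1, if_pos cp2] at hb
        exact absurd hb (by decide)
      · by_cases c2 : (q.1 : ℕ) = n - 2
        · have cp1 : ¬ (p.1 : ℕ) = n - 1 := by omega
          have cp2 : ¬ (p.1 : ℕ) = n - 2 := by omega
          have cp3 : (p.1 : ℕ) = n - 3 := by omega
          rw [if_neg c1, if_pos c2, if_neg cp1, if_neg cp2, cp3] at hb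
          have hcast : ((n - 3 : ℕ) : ZMod 3) = 2 := by
            have h9 : (n - 3) % 3 = 2 := by omega
            rw [← ZMod.natCast_mod, h9]
            decide
          rw [hcast] at hb
          exact absurd hb (by decide)
        · have cp1 : ¬ (p.1 : ℕ) = n - 1 := by omega
          have cp2 : ¬ (p.1 : ℕ) = n - 2 := by omega
          rw [if_neg c1, if_neg c2, if_neg cp1, if_neg cp2, ← h1] at hb
          push_cast at hb
          have : (0 : ZMod 3) = 1 := by linear_combination hb
          exact absurd this (by decide)
    · -- wrap edge
      have hp1 : ¬ (p.1 : ℕ) = n - 1 := by omega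
      have hp2 : ¬ (p.1 : ℕ) = n - 2 := by omega
      have hq1 : (q.1 : ℕ) = n - 1 := h2
      rw [scol, scol, if_neg hp1, if_neg hp2, if_pos hq1, h1, h3] at heq
      push_cast at heq
      have hj : p.2 = 0 := by
        have h2j : 2 * p.2 = 0 := by linear_combination heq
        have : ∀ x : ZMod 3, 2 * x = 0 → x = 0 := by decide
        exact this _ h2j
      rcases hv1 with hv | hv
      · exact hp (Prod.ext (Fin.ext (by omega)) (by rw [hj, hv2]))
      · exact hq (Prod.ext (Fin.ext (by omega)) (by rw [h3, hj, hv2]; ring))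
  intro p q hadj hp hq heq
  rw [Hgraph, SimpleGraph.fromRel_adj] at hadj
  obtain ⟨hne, hrel | hrel⟩ := hadj
  · exact key p q hrel hp hq heq
  · exact key q p hrel hq hp heq.symm

lemma exists_coloring_off (hn : 4 ≤ n) (v : Fin n × ZMod 3) :
    ∃ col : Fin n × ZMod 3 → ZMod 3,
      ∀ p q, (Hgraph n).Adj p q → p ≠ v → q ≠ v → col p ≠ col q := by
  have pick : ∀ M N t : ZMod 3, (M ≠ 0 ∨ N ≠ 0 ∨ t ≠ 0) →
      ∃ s1 s2 : ZMod 3, s1 ≠ 0 ∧ s2 ≠ 0 ∧ s1 * M + t + s2 * N ≠ 0 := by decide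
  -- generic flip construction
  have flip : ∀ m : ℕ, m ≤ n - 2 → ((v.1 : ℕ) = m ∨ (v.1 : ℕ) = m + 1) →
      (((m : ℕ) : ZMod 3) ≠ 0 ∨ (((n - 2 - m : ℕ)) : ZMod 3) ≠ 0 ∨ 2 * v.2 ≠ 0) →
      ∃ col : Fin n × ZMod 3 → ZMod 3,
        ∀ p q, (Hgraph n).Adj p q → p ≠ v → q ≠ v → col p ≠ col q := by
    intro m hm hv1 hgood
    obtain ⟨s1, s2, hs1, hs2, hB⟩ := pick _ _ _ hgood
    exact ⟨fcol m s1 s2 v.2, flip_proper hn m hm s1 s2 hs1 hs2 v hB hv1⟩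
  have hsub : ∀ a : ℕ, ((a : ℕ) : ZMod 3) = 0 → a % 3 = 0 := by
    intro a ha
    have := (ZMod.natCast_eq_zero_iff a 3).mp ha
    omega
  by_cases h0 : (v.1 : ℕ) = 0
  · by_cases hg : (((n - 2 - 0 : ℕ)) : ZMod 3) ≠ 0 ∨ 2 * v.2 ≠ 0
    · exact flip 0 (by omega) (Or.inl h0) (Or.inr hg)
    · push_neg at hg
      obtain ⟨hg1, hg2⟩ := hg
      have hj0 : v.2 = 0 := by
        have : ∀ x : ZMod 3, 2 * x = 0 → x = 0 := by decide
        exact this _ hg2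
      have hmod : n % 3 = 2 := by
        have := hsub _ hg1; omega
      exact ⟨scol n, special_proper hn hmod v hj0 (Or.inl h0)⟩
  · by_cases h1 : (v.1 : ℕ) = n - 1
    · by_cases hg : (((n - 2 : ℕ)) : ZMod 3) ≠ 0 ∨ 2 * v.2 ≠ 0
      · refine flip (n - 2) (le_refl _) (Or.inr (by omega)) ?_
        rcases hg with hg | hg
        · exact Or.inl hg
        · exact Or.inr (Or.inr hg)
      · push_neg at hg
        obtain ⟨hg1, hg2⟩ := hg
        have hj0 : v.2 = 0 := by
          have : ∀ x : ZMod 3, 2 * x = 0 → x = 0 := by decide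
          exact this _ hg2
        have hmod : n % 3 = 2 := by
          have := hsub _ hg1; omega
        exact ⟨scol n, special_proper hn hmod v hj0 (Or.inr h1)⟩
    · -- 1 ≤ v.1 ≤ n - 2
      have hlt : (v.1 : ℕ) < n := v.1.isLt
      have hrange : 1 ≤ (v.1 : ℕ) ∧ (v.1 : ℕ) ≤ n - 2 := by omega
      by_cases hg : (((v.1 : ℕ) : ℕ) : ZMod 3) ≠ 0 ∨
          (((n - 2 - (v.1 : ℕ) : ℕ)) : ZMod 3) ≠ 0 ∨ 2 * v.2 ≠ 0
      · exact flip (v.1 : ℕ) hrange.2 (Or.inl rfl) hg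
      · push_neg at hg
        refine flip ((v.1 : ℕ) - 1) (by omega) (Or.inr (by omega)) (Or.inl ?_)
        have hc : ((((v.1 : ℕ) - 1 : ℕ)) : ZMod 3) = (((v.1 : ℕ) : ℕ) : ZMod 3) - 1 := by
          have h' : ((v.1 : ℕ) - 1) + 1 = (v.1 : ℕ) := by omega
          have := congrArg (fun t : ℕ => (t : ZMod 3)) h'
          push_cast at this
          linear_combination this
        rw [hc, hg.1]
        decide
end HgraphAux

/-- For `n ≥ 4`, deleting any vertex of `H n` leaves a 3-colourable graph;
together with `χ(H n) = 4` this says that `H n` is 4-critical. -/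
theorem Hgraph_four_critical (n : ℕ) (hn : 4 ≤ n) :
    (Hgraph n).chromaticNumber = 4 ∧
      ∀ v : Fin n × ZMod 3,
        (SimpleGraph.induce {u | u ≠ v} (Hgraph n)).Colorable 3 := by
  constructor
  · have h4 : (Hgraph n).chromaticNumber ≤ 4 := by
      rw [show ((4 : ℕ∞)) = ((4 : ℕ) : ℕ∞) by norm_num,
        SimpleGraph.chromaticNumber_le_iff_colorable]
      exact HgraphAux.colorable_four n hn
    have h3 : ¬ (Hgraph n).chromaticNumber ≤ 3 := by
      intro h
      apply HgraphAux.not_colorable_three n hn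
      rw [show ((3 : ℕ∞)) = ((3 : ℕ) : ℕ∞) by norm_num,
        SimpleGraph.chromaticNumber_le_iff_colorable] at h
      exact h
    refine le_antisymm h4 ?_
    have hlt : (3 : ℕ∞) < (Hgraph n).chromaticNumber := lt_of_not_ge h3
    have := Order.add_one_le_of_lt hlt
    rwa [show ((3 : ℕ∞) + 1) = 4 by norm_num] at this
  · intro v
    obtain ⟨col, hcol⟩ := HgraphAux.exists_coloring_off hn v
    have C : (SimpleGraph.induce {u | u ≠ v} (Hgraph n)).Coloring (ZMod 3) := by
      refine SimpleGraph.Coloring.mk (fun x => col x.val) ?_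
      intro x y hadj
      exact hcol _ _ hadj x.2 y.2
    have := C.colorable
    rwa [show Fintype.card (ZMod 3) = 3 from rfl] at this
end

section
/- For every n ≥ 4, the fractional chromatic number of H_n equals 3. -/
/-- The fractional chromatic number of `G`: the infimum of `a / b` over all
proper colourings assigning to each vertex a `b`-element subset of a set of `a`
colours so that adjacent vertices receive disjoint sets. -/
noncomputable def fracChromatic {V : Type} (G : SimpleGraph V) : ℝ :=
  sInf {x : ℝ | ∃ a b : ℕ, 0 < b ∧
    (∃ f : V → Finset (Fin a), (∀ v, (f v).card = b) ∧
      ∀ v w, G.Adj v w → Disjoint (f v) (f w)) ∧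
    x = (a : ℝ) / (b : ℝ)}

namespace HgraphAux

def Bl : ZMod 3 → Finset (Fin 6) := fun j =>
  if j = 0 then {0, 1} else if j = 1 then {2, 3} else {4, 5}

def Dd : ZMod 3 → Finset (Fin 6) := fun j =>
  if j = 0 then {0, 2} else if j = 1 then {3, 4} else {1, 5}

def Ee : ZMod 3 → Finset (Fin 6) := fun j =>
  if j = 0 then {3, 5} else if j = 1 then {1, 2} else {0, 4}

/-- The colouring of column `i` (of `n` columns). -/
def col (n i : ℕ) (j : ZMod 3) : Finset (Fin 6) :=
  if i = n - 1 then Ee j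
  else if i = n - 2 then Dd j
  else if i = n - 3 then Bl (j + 2)
  else Bl (j + (i % 2 : ℕ))

lemma bl_card : ∀ j : ZMod 3, (Bl j).card = 2 := by decide
lemma dd_card : ∀ j : ZMod 3, (Dd j).card = 2 := by decide
lemma ee_card : ∀ j : ZMod 3, (Ee j).card = 2 := by decide

lemma col_card (n i : ℕ) (j : ZMod 3) : (col n i j).card = 2 := by
  unfold col
  split_ifs
  · exact ee_card j
  · exact dd_card j
  · exact bl_card _
  · exact bl_card _

lemma bl_bl : ∀ j j' : ZMod 3, j ≠ j' → Disjoint (Bl j) (Bl j') := by decide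
lemma dd_dd : ∀ j j' : ZMod 3, j ≠ j' → Disjoint (Dd j) (Dd j') := by decide
lemma ee_ee : ∀ j j' : ZMod 3, j ≠ j' → Disjoint (Ee j) (Ee j') := by decide
lemma dd_ee : ∀ j : ZMod 3, Disjoint (Dd j) (Ee j) := by decide
lemma bl2_dd : ∀ j : ZMod 3, Disjoint (Bl (j + 2)) (Dd j) := by decide
lemma bl_ee : ∀ j : ZMod 3, Disjoint (Bl j) (Ee (-j)) := by decide

lemma bl_bl' (j c c' : ZMod 3) (h : c ≠ c') : Disjoint (Bl (j + c)) (Bl (j + c')) :=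
  bl_bl _ _ fun h' => h (add_left_cancel h')

lemma col_n1 (n : ℕ) (j : ZMod 3) : col n (n - 1) j = Ee j := by
  unfold col; rw [if_pos rfl]

lemma col_n2 (n : ℕ) (hn : 4 ≤ n) (j : ZMod 3) : col n (n - 2) j = Dd j := by
  unfold col; rw [if_neg (by omega), if_pos rfl]

lemma col_n3 (n : ℕ) (hn : 4 ≤ n) (j : ZMod 3) : col n (n - 3) j = Bl (j + 2) := by
  unfold col; rw [if_neg (by omega), if_neg (by omega), if_pos rfl]

lemma col_gen (n i : ℕ) (h : i < n - 3) (j : ZMod 3) :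
    col n i j = Bl (j + (i % 2 : ℕ)) := by
  unfold col; rw [if_neg (by omega), if_neg (by omega), if_neg (by omega)]

lemma key (n : ℕ) (hn : 4 ≤ n) (i i' : ℕ) (hi : i < n) (hi' : i' < n) (j j' : ZMod 3)
    (h : (i = i' ∧ j ≠ j') ∨ (i + 1 = i' ∧ j = j') ∨ (i = 0 ∧ i' = n - 1 ∧ j' = -j)) :
    Disjoint (col n i j) (col n i' j') := by
  rcases h with ⟨rfl, hj⟩ | ⟨hii, rfl⟩ | ⟨rfl, rfl, rfl⟩
  · -- same column, different rows
    unfold col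
    split_ifs
    · exact ee_ee j j' hj
    · exact dd_dd j j' hj
    · exact bl_bl _ _ (fun h => hj (by exact add_right_cancel h))
    · exact bl_bl _ _ (fun h => hj (by exact add_right_cancel h))
  · -- consecutive columns, same row
    have h4 : i' = n - 1 ∨ i' = n - 2 ∨ i' = n - 3 ∨ i' < n - 3 := by omega
    rcases h4 with h4 | h4 | h4 | h4
    · have : i = n - 2 := by omega
      subst this; subst h4
      rw [col_n2 n hn, col_n1 n]
      exact dd_ee j
    · have : i = n - 3 := by omega
      subst this; subst h4
      rw [col_n3 n hn, col_n2 n hn]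
      exact bl2_dd j
    · have hlt : i < n - 3 := by omega
      subst h4
      rw [col_gen n i hlt, col_n3 n hn]
      rcases Nat.even_or_odd i with he | ho
      · have : i % 2 = 0 := Nat.even_iff.mp he
        rw [this]
        simpa using bl_bl' j 0 2 (by decide)
      · have : i % 2 = 1 := Nat.odd_iff.mp ho
        rw [this]
        simpa using bl_bl' j 1 2 (by decide)
    · have hlt : i < n - 3 := by omega
      have hlt' : i' < n - 3 := h4
      subst hii
      rw [col_gen n i hlt, col_gen n (i + 1) hlt']
      rcases Nat.even_or_odd i with he | ho
      · have h1 : i % 2 = 0 := Nat.even_iff.mp he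
        have h2 : (i + 1) % 2 = 1 := by omega
        rw [h1, h2]
        simpa using bl_bl' j 0 1 (by decide)
      · have h1 : i % 2 = 1 := Nat.odd_iff.mp ho
        have h2 : (i + 1) % 2 = 0 := by omega
        rw [h1, h2]
        simpa using bl_bl' j 1 0 (by decide)
  · -- the seam
    rw [col_n1 n, col_gen n 0 (by omega)]
    simpa using bl_ee j

end HgraphAux

open HgraphAux in
/-- For `n ≥ 4`, the fractional chromatic number of `H n` equals 3. -/
theorem Hgraph_fracChromatic (n : ℕ) (hn : 4 ≤ n) :
    fracChromatic (Hgraph n) = 3 := by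
  have h0 : (0 : ℕ) < n := by omega
  -- the set in question
  set S : Set ℝ := {x : ℝ | ∃ a b : ℕ, 0 < b ∧
    (∃ f : Fin n × ZMod 3 → Finset (Fin a), (∀ v, (f v).card = b) ∧
      ∀ v w, (Hgraph n).Adj v w → Disjoint (f v) (f w)) ∧
    x = (a : ℝ) / (b : ℝ)} with hS
  have hmem : (3 : ℝ) ∈ S := by
    refine ⟨6, 2, by norm_num, ⟨fun v => col n v.1.1 v.2, fun v => col_card n _ _, ?_⟩,
      by norm_num⟩
    intro v w hvw
    rcases hvw with ⟨hne, h | h⟩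
    · refine key n hn v.1.1 w.1.1 v.1.2 w.1.2 v.2 w.2 ?_
      rcases h with ⟨h1, h2⟩ | ⟨h1, h2⟩ | ⟨h1, h2, h3⟩
      · exact Or.inl ⟨by rw [h1], h2⟩
      · exact Or.inr (Or.inl ⟨h1, h2⟩)
      · exact Or.inr (Or.inr ⟨h1, h2, h3⟩)
    · refine (key n hn w.1.1 v.1.1 w.1.2 v.1.2 w.2 v.2 ?_).symm
      rcases h with ⟨h1, h2⟩ | ⟨h1, h2⟩ | ⟨h1, h2, h3⟩
      · exact Or.inl ⟨by rw [h1], h2⟩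
      · exact Or.inr (Or.inl ⟨h1, h2⟩)
      · exact Or.inr (Or.inr ⟨h1, h2, h3⟩)
  have hlb : ∀ x ∈ S, (3 : ℝ) ≤ x := by
    rintro x ⟨a, b, hb, ⟨f, hcard, hdisj⟩, rfl⟩
    -- a triangle forces `3 * b ≤ a`
    set v : ZMod 3 → Fin n × ZMod 3 := fun k => (⟨0, h0⟩, k) with hv
    have hadj : ∀ k k' : ZMod 3, k ≠ k' → (Hgraph n).Adj (v k) (v k') := by
      intro k k' hk
      refine ⟨fun h => hk (congrArg Prod.snd h), Or.inl (Or.inl ⟨rfl, hk⟩)⟩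
    have d01 : Disjoint (f (v 0)) (f (v 1)) := hdisj _ _ (hadj 0 1 (by decide))
    have d02 : Disjoint (f (v 0)) (f (v 2)) := hdisj _ _ (hadj 0 2 (by decide))
    have d12 : Disjoint (f (v 1)) (f (v 2)) := hdisj _ _ (hadj 1 2 (by decide))
    have hc : (f (v 0) ∪ f (v 1) ∪ f (v 2)).card = 3 * b := by
      rw [Finset.card_union_of_disjoint (Finset.disjoint_union_left.mpr ⟨d02, d12⟩),
        Finset.card_union_of_disjoint d01, hcard, hcard, hcard]
      ring
    have hle : 3 * b ≤ a := by
      have := Finset.card_le_univ (f (v 0) ∪ f (v 1) ∪ f (v 2))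
      rw [hc] at this
      simpa using this
    rw [le_div_iff₀ (by exact_mod_cast hb)]
    exact_mod_cast hle
  have hne : S.Nonempty := ⟨3, hmem⟩
  have hbdd : BddBelow S := ⟨3, hlb⟩
  exact le_antisymm (csInf_le hbdd hmem) (le_csInf hne hlb)
end

section
/- Let n ≥ 5 be odd and let W ⊆ V(H_n) contain at least n−1 vertices of the row R_0 = {0,…,n−1} × {0}. Then the graph H_n(W) obtained by replicating W is not 4-colourable. -/
/-!
A replicated vertex `w` and its clone `w'` are adjacent, so a proper 4-colouring gives them a
pair of two colours; if `v`, `w` are adjacent replicated vertices then `v, v', w, w'` form a `K₄`,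
so the two pairs are complementary. The row `R₀` is an odd cycle of `H_n` (the twist edge joins
`(0,0)` to `(n-1,0)`), and all its vertices but at most one, `u`, are replicated. Going around the
cycle from `u`, the pairs alternate along the odd path `R₀ - u`, so its two ends carry complementary
pairs; but the colour of `u` lies in neither, since `u` is adjacent to both ends and their clones.
-/

/-- Replicating a set `W` of vertices of `G`: each `w ∈ W` gets a clone (the
corresponding element of `Sum.inr`) adjacent to `w` and to all its neighbours. -/
def SimpleGraph.replicateSet {V : Type} (G : SimpleGraph V) (W : Set V) :
    SimpleGraph (V ⊕ W) where
  Adj x y :=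
    match x, y with
    | Sum.inl a, Sum.inl b => G.Adj a b
    | Sum.inl a, Sum.inr b => G.Adj a (b : V) ∨ a = (b : V)
    | Sum.inr a, Sum.inl b => G.Adj (a : V) b ∨ (a : V) = b
    | Sum.inr a, Sum.inr b => G.Adj (a : V) (b : V)
  symm := by
    constructor
    rintro (a | a) (b | b) h <;> simp only at h ⊢ <;>
      first
        | exact G.adj_symm h
        | (rcases h with h | h
           · exact Or.inl (G.adj_symm h)
           · exact Or.inr h.symm)
  loopless := by
    constructor
    rintro (a | a) h <;> simp only at h <;> exact G.irrefl h

/-- `G` is `k`-critical: `χ(G) = k` and deleting any vertex leaves a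
`(k-1)`-colourable graph. -/
def SimpleGraph.IsCrit {V : Type} (G : SimpleGraph V) (k : ℕ) : Prop :=
  G.chromaticNumber = k ∧
    ∀ v : V, (SimpleGraph.induce {u | u ≠ v} G).Colorable (k - 1)

theorem Function.eq_iterate_of_forall_lt_succ_eq {β : Type*} (g : β → β) (s : ℕ → β) {m : ℕ}
    (h : ∀ k < m, s (k + 1) = g (s k)) : s m = g^[m] (s 0) := by
  induction m with
  | zero => rfl
  | succ k ih =>
    rw [h k k.lt_succ_self, ih fun j hj => h j (by omega), Function.iterate_succ_apply']

theorem Set.exists_forall_ne_mem_of_card_sub_one_le {ι : Type*} [Finite ι] [Nonempty ι]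
    {s : Set ι} (h : Nat.card ι - 1 ≤ s.ncard) : ∃ i₀, ∀ i ≠ i₀, i ∈ s := by
  have hc : sᶜ.ncard ≤ 1 := by
    rw [Set.ncard_compl]
    omega
  obtain ⟨i₀, hi₀⟩ := (Set.ncard_le_one_iff_subset_singleton).mp hc
  exact ⟨i₀, fun i hi => by_contra fun his => hi (hi₀ his)⟩

namespace SimpleGraph

variable {V α : Type} {G : SimpleGraph V} {W : Set V}

namespace Coloring

variable [DecidableEq α] (C : (G.replicateSet W).Coloring α)

def clonePair (w : W) : Finset α :=
  {C (.inl w), C (.inr w)}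

theorem card_clonePair (w : W) : (C.clonePair w).card = 2 :=
  Finset.card_pair (C.valid (Or.inr rfl))

theorem disjoint_clonePair {v w : W} (h : G.Adj v w) :
    Disjoint (C.clonePair v) (C.clonePair w) := by
  simp only [clonePair, Finset.disjoint_insert_left, Finset.disjoint_singleton_left,
    Finset.mem_insert, Finset.mem_singleton, not_or]
  exact ⟨⟨C.valid h, C.valid (Or.inl h)⟩, C.valid (Or.inl h), C.valid h⟩

theorem color_inl_notMem_clonePair {v : V} {w : W} (h : G.Adj v w) :
    C (.inl v) ∉ C.clonePair w := by
  simp only [clonePair, Finset.mem_insert, Finset.mem_singleton, not_or]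
  exact ⟨C.valid h, C.valid (Or.inl h)⟩

theorem clonePair_eq_compl [Fintype α] (hα : Fintype.card α = 4) {v w : W} (h : G.Adj v w) :
    C.clonePair w = (C.clonePair v)ᶜ := by
  refine (Finset.compl_eq_of_disjoint_of_card_add_eq (C.disjoint_clonePair h) ?_).symm
  rw [card_clonePair, card_clonePair, Finset.card_univ, hα]

end Coloring

theorem replicateSet_not_colorable_four_of_odd_closed_walk (f : ℕ → V) {m : ℕ} (hm : Odd m)
    (hadj : ∀ k < m, G.Adj (f k) (f (k + 1))) (hclosed : f m = f 0)
    (hW : ∀ k, 0 < k → k < m → f k ∈ W) : ¬ (G.replicateSet W).Colorable 4 := by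
  rintro ⟨C⟩
  classical
  have hm3 : 3 ≤ m := by
    by_contra hlt
    obtain rfl : m = 1 := by
      obtain ⟨j, rfl⟩ := hm
      omega
    have hloop := hadj 0 one_pos
    rw [zero_add, hclosed] at hloop
    exact G.irrefl hloop
  -- `s k` is the clone pair of `f (k + 1)`; the `dif` only makes it total in `k`.
  let s : ℕ → Finset (Fin 4) := fun k =>
    if h : f (k + 1) ∈ W then C.clonePair ⟨f (k + 1), h⟩ else ∅
  have hs : ∀ k (hk : k + 2 ≤ m), s k = C.clonePair ⟨f (k + 1), hW _ k.succ_pos (by omega)⟩ :=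
    fun k _ => dif_pos _
  have hstep : ∀ k < m - 2, s (k + 1) = (s k)ᶜ := by
    intro k hk
    rw [hs k (by omega), hs (k + 1) (by omega)]
    exact C.clonePair_eq_compl (Fintype.card_fin 4) (hadj (k + 1) (by omega))
  have hodd : Odd (m - 2) := by
    obtain ⟨j, rfl⟩ := hm
    exact ⟨j - 1, by omega⟩
  have hends : s (m - 2) = (s 0)ᶜ := by
    rw [Function.eq_iterate_of_forall_lt_succ_eq compl s hstep, compl_involutive.iterate_odd hodd]
  have hx_first : C (.inl (f 0)) ∉ s 0 := by
    rw [hs 0 (by omega)]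
    exact C.color_inl_notMem_clonePair (hadj 0 (by omega))
  have hback : G.Adj (f 0) (f (m - 2 + 1)) := by
    have h := hadj (m - 2 + 1) (by omega)
    rw [show m - 2 + 1 + 1 = m by omega, hclosed] at h
    exact h.symm
  have hx_last : C (.inl (f 0)) ∉ s (m - 2) := by
    rw [hs (m - 2) (by omega)]
    exact C.color_inl_notMem_clonePair hback
  exact hx_last (hends ▸ Finset.mem_compl.mpr hx_first)

end SimpleGraph

theorem Fin.ofNat_add_ne_self {n : ℕ} [NeZero n] (i : Fin n) {j : ℕ} (hj : 0 < j)
    (hjn : j < n) : Fin.ofNat n (i + j) ≠ i := by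
  rw [Ne, Fin.ext_iff, Fin.val_ofNat]
  rcases Nat.lt_or_ge ((i : ℕ) + j) n with hlt | hge
  · rw [Nat.mod_eq_of_lt hlt]
    omega
  · rw [Nat.mod_eq_sub_mod hge, Nat.mod_eq_of_lt (by omega)]
    omega

theorem Hgraph_adj_ofNat_succ {n : ℕ} [NeZero n] (hn : 2 ≤ n) (k : ℕ) :
    (Hgraph n).Adj (Fin.ofNat n k, 0) (Fin.ofNat n (k + 1), 0) := by
  have hk : k % n < n := Nat.mod_lt k (by omega)
  have hsucc : (k + 1) % n = (k % n + 1) % n := by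
    rw [Nat.add_mod, Nat.mod_eq_of_lt (show 1 < n by omega)]
  rw [Hgraph, SimpleGraph.fromRel_adj]
  simp only [ne_eq, Prod.mk.injEq, Fin.ext_iff, Fin.val_ofNat, and_true, neg_zero]
  rcases Nat.lt_or_ge (k % n + 1) n with hlt | hge
  · rw [hsucc, Nat.mod_eq_of_lt hlt]
    omega
  · rw [hsucc, show k % n + 1 = n by omega, Nat.mod_self]
    omega

theorem exists_forall_ne_mem_row_zero {n : ℕ} [NeZero n] {W : Set (Fin n × ZMod 3)}
    (h : n - 1 ≤ (W ∩ {v | v.2 = 0}).ncard) : ∃ i₀ : Fin n, ∀ i ≠ i₀, (i, (0 : ZMod 3)) ∈ W := by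
  refine Set.exists_forall_ne_mem_of_card_sub_one_le (s := (fun i => (i, 0)) ⁻¹' W) ?_
  have hrow : (fun i : Fin n => (i, (0 : ZMod 3))) ⁻¹' W =
      (fun i => (i, 0)) ⁻¹' (W ∩ {v | v.2 = 0}) := by
    ext
    simp
  rw [hrow, Set.ncard_preimage_of_injective_subset_range (fun i j hij => congrArg Prod.fst hij)]
  · simpa using h
  · rintro ⟨i, j⟩ ⟨-, rfl : j = 0⟩
    exact ⟨i, rfl⟩

/-- If `n ≥ 5` is odd and `W` contains at least `n - 1` vertices of the row
`R₀ = {0,…,n-1} × {0}`, then the replicated graph is not 4-colourable. -/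
theorem replicate_row_zero_odd (n : ℕ) (hn : 5 ≤ n) (hodd : Odd n)
    (W : Set (Fin n × ZMod 3))
    (h : n - 1 ≤ (W ∩ {v | v.2 = 0}).ncard) :
    ¬ ((Hgraph n).replicateSet W).Colorable 4 := by
  have : NeZero n := ⟨by omega⟩
  obtain ⟨i₀, hi₀⟩ := exists_forall_ne_mem_row_zero h
  refine SimpleGraph.replicateSet_not_colorable_four_of_odd_closed_walk
    (fun k => (Fin.ofNat n (i₀ + k), (0 : ZMod 3))) hodd
    (fun k _ => Hgraph_adj_ofNat_succ (by omega) _) ?_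
    (fun k hk hkn => hi₀ _ (Fin.ofNat_add_ne_self i₀ hk hkn))
  simp [Fin.ext_iff, Nat.mod_eq_of_lt i₀.isLt]
end
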